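/- arXiv:math/0203034 — 4 statements merged into one kernel-verified Lean document; each statement's English description precedes it below -/
import Mathlib

section
/- There is no irreducible plane quintic curve having exactly six cusps (six A_2 singularities) as its singular locus. -/
theorem sum_milnor_add_multiplicity_sub_one_of_cusps {Point : Type*} (s : Finset Point)
    (μ m : Point → ℕ) (hcusp : ∀ P ∈ s, μ P = 2 ∧ m P = 2) :
    ∑ P ∈ s, (μ P + m P - 1) = 3 * s.card := by
  rw [Finset.sum_congr rfl fun P hP => by rw [(hcusp P hP).1, (hcusp P hP).2]]
  simp [mul_comm]

/-- There is no irreducible plane quintic with exactly six cusps (six `A_2`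
singularities, each with Milnor number 2 and multiplicity 2).  The statement is
formalized relative to an abstract theory of irreducible plane curves with a
dual curve, satisfying the class formula
`deg C* = d(d-1) - Σ_{P ∈ Sing C} (μ(C,P) + m(C,P) - 1)` and the classical fact
that an irreducible curve whose dual has degree 2 is itself a conic. -/
theorem no_six_cuspidal_quintic {Curve Point : Type*}
    (degree : Curve → ℕ) (dual : Curve → Curve) (Irred : Curve → Prop)
    (Sing : Curve → Finset Point) (μ m : Curve → Point → ℕ)
    (classFormula : ∀ C, Irred C →
      degree (dual C) = degree C * (degree C - 1)
        - ∑ P ∈ Sing C, (μ C P + m C P - 1))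
    (dualDegTwo : ∀ C, Irred C → degree (dual C) = 2 → degree C = 2) :
    ¬ ∃ C, Irred C ∧ degree C = 5 ∧ (Sing C).card = 6 ∧
      (∀ P ∈ Sing C, μ C P = 2 ∧ m C P = 2) := by
  rintro ⟨C, hIrr, hdeg, hcard, hcusp⟩
  have hsum : ∑ P ∈ Sing C, (μ C P + m C P - 1) = 18 := by
    rw [sum_milnor_add_multiplicity_sub_one_of_cusps _ _ _ hcusp, hcard]
  have hdual : degree (dual C) = 2 := by
    rw [classFormula C hIrr, hdeg, hsum]
  have hconic : degree C = 2 := dualDegTwo C hIrr hdual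
  omega
end

section
/- There is no irreducible plane quintic with singular locus consisting exactly of four cusps (A_2) and one A_4 singularity, and no irreducible plane quintic with exactly five cusps and one node (A_1). -/
/-!
Both singularity configurations have total defect `Σ (μ + m - 1) = 17`, so by the class formula
a quintic carrying either one would have dual degree `5 · 4 - 17 = 3`. By biduality the quintic
would then be the dual of an irreducible cubic, whose degree can only be 3, 4 or 6.
-/

theorem Finset.sum_eq_add_card_sub_one_nsmul {ι M : Type*} [AddCommMonoid M] [DecidableEq ι]
    {s : Finset ι} {f : ι → M} {Q : ι} {b : M} (hQ : Q ∈ s)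
    (hf : ∀ P ∈ s, P ≠ Q → f P = b) :
    ∑ P ∈ s, f P = f Q + (s.card - 1) • b := by
  rw [← Finset.add_sum_erase s f hQ,
    Finset.sum_congr rfl fun P hP => hf P (Finset.mem_of_mem_erase hP) (Finset.ne_of_mem_erase hP),
    Finset.sum_const, Finset.card_erase_of_mem hQ]

theorem degree_mem_of_degree_dual_eq_three {Curve : Type*} {degree : Curve → ℕ}
    {dual : Curve → Curve} {Irred : Curve → Prop}
    (bidual : ∀ C, Irred C → dual (dual C) = C)
    (dualIrred : ∀ C, Irred C → Irred (dual C))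
    (cubicDual : ∀ C, Irred C → degree C = 3 →
      degree (dual C) ∈ ({3, 4, 6} : Set ℕ))
    {C : Curve} (hC : Irred C) (h3 : degree (dual C) = 3) :
    degree C ∈ ({3, 4, 6} : Set ℕ) :=
  bidual C hC ▸ cubicDual (dual C) (dualIrred C hC) h3

/-- There is no irreducible plane quintic with singular locus consisting exactly
of four cusps (`A_2`: μ=2, m=2) together with one `A_4` (μ=4, m=2), and none
with exactly five cusps and one node (`A_1`: μ=1, m=2).  Formalized relative to
an abstract duality theory of irreducible plane curves: the class formula
`deg C* = d(d-1) - Σ (μ+m-1)`, biduality `C** = C`, irreducibility of the dual,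
and the classical fact that the dual of an irreducible cubic has degree 3, 4 or
6 (a smooth cubic dualizes to a 9-cuspidal sextic, a nodal cubic to a
3-cuspidal quartic, a cuspidal cubic to a cuspidal cubic). -/
theorem no_quintic_4A2_A4_nor_5A2_A1 {Curve Point : Type*}
    (degree : Curve → ℕ) (dual : Curve → Curve) (Irred : Curve → Prop)
    (Sing : Curve → Finset Point) (μ m : Curve → Point → ℕ)
    (classFormula : ∀ C, Irred C →
      degree (dual C) = degree C * (degree C - 1)
        - ∑ P ∈ Sing C, (μ C P + m C P - 1))
    (bidual : ∀ C, Irred C → dual (dual C) = C)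
    (dualIrred : ∀ C, Irred C → Irred (dual C))
    (cubicDual : ∀ C, Irred C → degree C = 3 →
      degree (dual C) ∈ ({3, 4, 6} : Set ℕ)) :
    ¬ ∃ C, Irred C ∧ degree C = 5 ∧
      (((Sing C).card = 5 ∧ ∃ Q ∈ Sing C, μ C Q = 4 ∧ m C Q = 2 ∧
          ∀ P ∈ Sing C, P ≠ Q → μ C P = 2 ∧ m C P = 2) ∨
       ((Sing C).card = 6 ∧ ∃ Q ∈ Sing C, μ C Q = 1 ∧ m C Q = 2 ∧
          ∀ P ∈ Sing C, P ≠ Q → μ C P = 2 ∧ m C P = 2)) := by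
  classical
  rintro ⟨C, hC, hdeg, hsing⟩
  have hdefect : ∑ P ∈ Sing C, (μ C P + m C P - 1) = 17 := by
    rcases hsing with ⟨hcard, Q, hQ, hμQ, hmQ, hcusps⟩ | ⟨hcard, Q, hQ, hμQ, hmQ, hcusps⟩ <;>
    · rw [Finset.sum_eq_add_card_sub_one_nsmul (b := 3) hQ fun P hP hPQ => by
          rw [(hcusps P hP hPQ).1, (hcusps P hP hPQ).2],
        hμQ, hmQ, hcard]
      rfl
  have hdual : degree (dual C) = 3 := by
    rw [classFormula C hC, hdefect, hdeg]
  have := degree_mem_of_degree_dual_eq_three bidual dualIrred cubicDual hC hdual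
  simp [hdeg] at this
end

section
/- The germ C_{3,2m}: y³ + y²x² - x^{2m} = 0 at the origin with m ≥ 4 has exactly three smooth branches L₁, L₂, L₃, where L₁: y + x² + (higher) = 0 and L₂, L₃: y ± x^{m-1} + (higher) = 0; moreover the germ (L₂ ∪ L₃, O) is an A_{2m-3} singularity and (L₁ ∪ L₂, O) is an A_3 singularity. -/
noncomputable section

/-- The ring of formal power series in two variables over ℂ, modelling germs of
plane curves at a point. -/
abbrev R2 : Type := MvPowerSeries (Fin 2) ℂ

/-- The local coordinate `x`. -/
def xx : R2 := MvPowerSeries.X 0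

/-- The local coordinate `y`. -/
def yy : R2 := MvPowerSeries.X 1

/-- The maximal ideal `(x, y)` of the local ring of germs. -/
def mIdeal : Ideal R2 := Ideal.span {xx, yy}

/-- Two germs are (formally) analytically equivalent if they differ by a local
analytic change of coordinates and a unit. -/
def AnalyticEquiv (F G : R2) : Prop :=
  ∃ (φ : R2 ≃ₐ[ℂ] R2) (u : R2), IsUnit u ∧ F = u * φ G

/-- A germ defines a smooth branch iff it lies in the maximal ideal but not in
its square. -/
def IsSmoothGerm (F : R2) : Prop := F ∈ mIdeal ∧ F ∉ mIdeal ^ 2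

/-- The local intersection multiplicity of two germs:
`I(F,G;O) = dim_ℂ ℂ⟦x,y⟧/(F,G)`. -/
def interMult (F G : R2) : ℕ := Module.finrank ℂ (R2 ⧸ Ideal.span {F, G})

/-!
Over `ℂ⟦x⟧` the cubic `y³ + x² y² - x^(2m)` splits as `(y + p₁) (y + p₂) (y + p₃)` with
`p₁ = x² (1 - κ²)`, `p₂ = x² κ α`, `p₃ = x² κ (κ - α)`, where Hensel's lemma provides
`κ = x^(m-3) (1 + …)` with `κ (1 - κ²) = x^(m-3)` and `α = 1 + …` with `α (κ - α) = κ² - 1`;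
Vieta's formulas for the `pᵢ` then follow from these two equations. Each factor is `y` plus a
series in `x` of order at least two, hence a smooth branch. Two branches `y + p`, `y + q` with
`p - q = xⁿ w`, `w` a unit, satisfy `4 (y + p) (y + q) = (2y + p + q)² - x^(2n) w²`, so the
coordinate change `y ↦ w⁻¹ (2y + p + q)` turns their union into `y² - x^(2n)`.
-/

open PowerSeries

theorem exists_isRoot_of_constantCoeff {R : Type*} [CommRing R] (f : Polynomial R⟦X⟧)
    (hf : f.Monic) (a₀ : R) (h₀ : constantCoeff (f.eval (C a₀)) = 0)
    (h₁ : IsUnit (constantCoeff (f.derivative.eval (C a₀)))) :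
    ∃ a, f.IsRoot a ∧ constantCoeff a = a₀ := by
  obtain ⟨a, ha, ha₀⟩ := HenselianRing.is_henselian (I := Ideal.span {X}) f hf (C a₀)
    (Ideal.mem_span_singleton.2 (X_dvd_iff.2 h₀)) ((isUnit_iff_constantCoeff.2 h₁).map _)
  have := X_dvd_iff.1 (Ideal.mem_span_singleton.1 ha₀)
  exact ⟨a, ha, by simpa [sub_eq_zero] using this⟩

theorem exists_mul_one_sub_sq_eq_X_pow {R : Type*} [CommRing R] {j : ℕ} (hj : j ≠ 0) :
    ∃ κ : R⟦X⟧, constantCoeff κ = 0 ∧ κ * (1 - κ ^ 2) = X ^ j := by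
  obtain ⟨κ, hκ, hκ₀⟩ := exists_isRoot_of_constantCoeff
    (Polynomial.X ^ 3 - Polynomial.X + Polynomial.C (X ^ j) : Polynomial R⟦X⟧) (by monicity!) 0
    (by simp [hj]) (by
      simp only [Polynomial.derivative_add, Polynomial.derivative_sub, Polynomial.derivative_X,
        Polynomial.derivative_C, Polynomial.derivative_X_pow]
      simp)
  refine ⟨κ, hκ₀, ?_⟩
  simp only [Polynomial.IsRoot, Polynomial.eval_add, Polynomial.eval_sub, Polynomial.eval_pow,
    Polynomial.eval_X, Polynomial.eval_C] at hκ
  linear_combination -hκ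

theorem exists_mul_sub_eq_sq_sub_one {R : Type*} [CommRing R] (h2 : IsUnit (2 : R)) {κ : R⟦X⟧}
    (hκ : constantCoeff κ = 0) : ∃ α : R⟦X⟧, constantCoeff α = 1 ∧ α * (κ - α) = κ ^ 2 - 1 := by
  obtain ⟨α, hα, hα₀⟩ := exists_isRoot_of_constantCoeff
    (Polynomial.X ^ 2 - Polynomial.C κ * Polynomial.X + Polynomial.C (κ ^ 2 - 1)) (by monicity!) 1
    (by simp [hκ]) (by
      simp only [Polynomial.derivative_add, Polynomial.derivative_sub,
        Polynomial.derivative_C_mul_X, Polynomial.derivative_C, Polynomial.derivative_X_pow]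
      simpa [hκ, map_ofNat] using h2)
  refine ⟨α, hα₀, ?_⟩
  simp only [Polynomial.IsRoot, Polynomial.eval_add, Polynomial.eval_sub, Polynomial.eval_pow,
    Polynomial.eval_mul, Polynomial.eval_X, Polynomial.eval_C] at hα
  linear_combination -hα

theorem xx_mem_mIdeal : xx ∈ mIdeal := Ideal.subset_span (by simp)

theorem yy_mem_mIdeal : yy ∈ mIdeal := Ideal.subset_span (by simp)

theorem constantCoeff_eq_zero_of_mem_mIdeal {f : R2} (hf : f ∈ mIdeal) :
    MvPowerSeries.constantCoeff f = 0 := by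
  have : mIdeal ≤ RingHom.ker (MvPowerSeries.constantCoeff (R := ℂ)) := by
    rw [mIdeal, Ideal.span_le]
    rintro f (rfl | rfl) <;> simp [xx, yy]
  exact this hf

theorem two_le_order_of_mem_mIdeal_sq {f : R2} (hf : f ∈ mIdeal ^ 2) : 2 ≤ f.order := by
  rw [pow_two] at hf
  refine Submodule.mul_induction_on hf (fun a ha b hb => ?_) (fun a b ha hb => ?_)
  · calc (2 : ℕ∞) = 1 + 1 := by norm_num
      _ ≤ a.order + b.order := by
        gcongr <;> exact MvPowerSeries.one_le_order_iff_constCoeff_eq_zero.2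
          (constantCoeff_eq_zero_of_mem_mIdeal ‹_›)
      _ ≤ (a * b).order := MvPowerSeries.le_order_mul
  · exact (le_min ha hb).trans MvPowerSeries.min_order_le_add

theorem yy_notMem_mIdeal_sq : yy ∉ mIdeal ^ 2 := by
  intro h
  have h2 := two_le_order_of_mem_mIdeal_sq h
  have h1 : yy.order ≤ 1 := by
    simpa using MvPowerSeries.order_le (f := yy) (d := Finsupp.single 1 1) (by simp [yy])
  exact absurd (h2.trans h1) (by norm_num)

theorem isSmoothGerm_yy_add {g : R2} (hg : g ∈ mIdeal ^ 2) : IsSmoothGerm (yy + g) :=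
  ⟨add_mem yy_mem_mIdeal (Ideal.pow_le_self two_ne_zero hg), fun h =>
    yy_notMem_mIdeal_sq (by simpa using sub_mem h hg)⟩

theorem hasSubst_xx : HasSubst xx :=
  HasSubst.of_constantCoeff_zero (constantCoeff_eq_zero_of_mem_mIdeal xx_mem_mIdeal)

def ofX : ℂ⟦X⟧ →ₐ[ℂ] R2 := substAlgHom hasSubst_xx

@[simp]
theorem ofX_X : ofX X = xx := substAlgHom_X hasSubst_xx

theorem ofX_X_pow_mul_mem_pow (n : ℕ) (g : ℂ⟦X⟧) : ofX (X ^ n * g) ∈ mIdeal ^ n := by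
  rw [map_mul, map_pow, ofX_X]
  exact Ideal.mul_mem_right _ _ (Ideal.pow_mem_pow xx_mem_mIdeal n)

theorem ofX_mem_mIdeal {g : ℂ⟦X⟧} (hg : constantCoeff g = 0) : ofX g ∈ mIdeal := by
  obtain ⟨g', rfl⟩ := X_dvd_iff.2 hg
  simpa using ofX_X_pow_mul_mem_pow 1 g'

theorem ofX_X_pow_mul_mem_pow_succ (n : ℕ) {g : ℂ⟦X⟧} (hg : constantCoeff g = 0) :
    ofX (X ^ n * g) ∈ mIdeal ^ (n + 1) := by
  obtain ⟨g', rfl⟩ := X_dvd_iff.2 hg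
  rw [← mul_assoc, ← pow_succ]
  exact ofX_X_pow_mul_mem_pow _ _

theorem hasSubst_shear (u : ℂ⟦X⟧) {a : ℂ⟦X⟧} (ha : constantCoeff a = 0) :
    MvPowerSeries.HasSubst ![xx, ofX u * yy + ofX a] :=
  MvPowerSeries.hasSubst_of_constantCoeff_zero fun i => by
    refine constantCoeff_eq_zero_of_mem_mIdeal ?_
    fin_cases i
    · exact xx_mem_mIdeal
    · exact add_mem (Ideal.mul_mem_left _ _ yy_mem_mIdeal) (ofX_mem_mIdeal ha)

section Shear

variable (u a : ℂ⟦X⟧) (ha : constantCoeff a = 0)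

def shear : R2 →ₐ[ℂ] R2 := MvPowerSeries.substAlgHom (hasSubst_shear u ha)

theorem shear_xx : shear u a ha xx = xx :=
  MvPowerSeries.substAlgHom_X _ 0

theorem shear_yy : shear u a ha yy = ofX u * yy + ofX a :=
  MvPowerSeries.substAlgHom_X _ 1

theorem shear_ofX (f : ℂ⟦X⟧) :
    shear u a ha (ofX f) = ofX f :=
  calc shear u a ha (ofX f) = MvPowerSeries.subst (fun _ => shear u a ha xx) f :=
        (MvPowerSeries.substAlgHom_comp_substAlgHom_apply (R := ℂ) hasSubst_xx.const
          (hasSubst_shear u ha) f).trans (MvPowerSeries.substAlgHom_apply _ f)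
    _ = ofX f := by rw [shear_xx, ofX, coe_substAlgHom]; rfl

end Shear

theorem shear_shear {u a u' a' : ℂ⟦X⟧} (ha : constantCoeff a = 0) (ha' : constantCoeff a' = 0)
    (f : R2) :
    shear u a ha (shear u' a' ha' f) =
      shear (u' * u) (u' * a + a') (by simp [ha, ha']) f := by
  refine (MvPowerSeries.substAlgHom_comp_substAlgHom_apply (R := ℂ) (hasSubst_shear u' ha')
    (hasSubst_shear u ha) f).trans ?_
  rw [shear, MvPowerSeries.substAlgHom_apply, MvPowerSeries.substAlgHom_apply]
  congr 1
  funext i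
  fin_cases i
  · exact shear_xx u a ha
  · change shear u a ha (ofX u' * yy + ofX a') = _
    simp only [map_add, map_mul, shear_yy, shear_ofX, Fin.mk_one, Matrix.cons_val_one,
      Matrix.cons_val_zero]
    ring

theorem shear_eq_self {u a : ℂ⟦X⟧} (ha : constantCoeff a = 0) (hu : u = 1) (ha₀ : a = 0)
    (f : R2) : shear u a ha f = f := by
  subst hu ha₀
  have hX : ![xx, ofX 1 * yy + ofX 0] = MvPowerSeries.X := by
    funext i
    fin_cases i <;> simp [xx, yy]
  rw [shear, MvPowerSeries.substAlgHom_apply, hX, MvPowerSeries.subst_self, id]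

def shearEquiv {u : ℂ⟦X⟧} (hu : IsUnit u) (a : ℂ⟦X⟧) (ha : constantCoeff a = 0) :
    R2 ≃ₐ[ℂ] R2 :=
  AlgEquiv.ofAlgHom (shear u a ha) (shear ↑hu.unit⁻¹ (-(↑hu.unit⁻¹ * a)) (by simp [ha]))
    (AlgHom.ext fun f => by
      rw [AlgHom.comp_apply, shear_shear]
      exact shear_eq_self _ hu.val_inv_mul (by ring) f)
    (AlgHom.ext fun f => by
      rw [AlgHom.comp_apply, shear_shear]
      refine shear_eq_self _ hu.mul_val_inv ?_ f
      linear_combination (-a) * hu.mul_val_inv)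

theorem shearEquiv_apply {u : ℂ⟦X⟧} (hu : IsUnit u) (a : ℂ⟦X⟧) (ha : constantCoeff a = 0)
    (f : R2) : shearEquiv hu a ha f = shear u a ha f := rfl

theorem analyticEquiv_mul_of_sub_eq {p q w : ℂ⟦X⟧} (n : ℕ) (hp : constantCoeff p = 0)
    (hq : constantCoeff q = 0) (hw : IsUnit w) (hpq : p - q = X ^ n * w) :
    AnalyticEquiv ((yy + ofX p) * (yy + ofX q)) (yy ^ 2 - xx ^ (2 * n)) := by
  obtain ⟨v, hv⟩ := hw.exists_right_inv
  have h2 : IsUnit (2 : ℂ⟦X⟧) := isUnit_iff_constantCoeff.2 (by rw [map_ofNat]; norm_num)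
  obtain ⟨c, hc⟩ := (isUnit_iff_constantCoeff (φ := (4 : ℂ⟦X⟧))).2
    (by rw [map_ofNat]; norm_num) |>.exists_right_inv
  have hu : IsUnit (2 * v) := h2.mul (.of_mul_eq_one_right _ hv)
  have hunit : IsUnit (c * w ^ 2) := (IsUnit.of_mul_eq_one_right _ hc).mul (hw.pow 2)
  refine ⟨shearEquiv hu (v * (p + q)) (by simp [hp, hq]), ofX (c * w ^ 2), hunit.map ofX, ?_⟩
  rw [shearEquiv_apply, map_sub, map_pow, map_pow, shear_xx, shear_yy]
  have hv' := congrArg ofX hv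
  have hc' := congrArg ofX hc
  have hpq' := congrArg ofX hpq
  simp only [map_mul, map_one, map_ofNat, map_pow, map_sub, ofX_X, map_add] at hv' hc' hpq' ⊢
  linear_combination (-(yy + ofX p) * (yy + ofX q)) * hc'
    - ofX c * (2 * yy + ofX p + ofX q) ^ 2 * (ofX w * ofX v + 1) * hv'
    - ofX c * (ofX p - ofX q + xx ^ n * ofX w) * hpq'

theorem isSmoothGerm_yy_add_ofX {n : ℕ} (hn : 2 ≤ n) (g : ℂ⟦X⟧) :
    IsSmoothGerm (yy + ofX (X ^ n * g)) :=
  isSmoothGerm_yy_add (Ideal.pow_le_pow_right hn (ofX_X_pow_mul_mem_pow n g))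

theorem exists_eq_yy_add_X_pow_add {g : ℂ⟦X⟧} (n : ℕ) (hg : constantCoeff g = 0) :
    ∃ h ∈ mIdeal ^ (n + 1), yy + ofX (X ^ n * (1 + g)) = yy + xx ^ n + h :=
  ⟨_, ofX_X_pow_mul_mem_pow_succ n hg, by
    simp only [map_mul, map_add, map_one, map_pow, ofX_X]; ring⟩

theorem exists_eq_yy_sub_X_pow_add {g : ℂ⟦X⟧} (n : ℕ) (hg : constantCoeff g = 0) :
    ∃ h ∈ mIdeal ^ (n + 1), yy + ofX (X ^ n * (g - 1)) = yy - xx ^ n + h :=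
  ⟨_, ofX_X_pow_mul_mem_pow_succ n hg, by
    simp only [map_mul, map_sub, map_one, map_pow, ofX_X]; ring⟩

theorem cubic_eq_mul_of_vieta {p₁ p₂ p₃ : ℂ⟦X⟧} {N : ℕ} (h₁ : p₁ + p₂ + p₃ = X ^ 2)
    (h₂ : p₁ * p₂ + p₁ * p₃ + p₂ * p₃ = 0) (h₃ : p₁ * p₂ * p₃ = -X ^ N) :
    yy ^ 3 + yy ^ 2 * xx ^ 2 - xx ^ N = (yy + ofX p₁) * (yy + ofX p₂) * (yy + ofX p₃) := by
  have h₁' := congrArg ofX h₁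
  have h₂' := congrArg ofX h₂
  have h₃' := congrArg ofX h₃
  simp only [map_add, map_mul, map_pow, map_neg, map_zero, ofX_X] at h₁' h₂' h₃'
  linear_combination (-yy ^ 2) * h₁' - yy * h₂' - h₃'

theorem exists_branch_series {m : ℕ} (hm : 4 ≤ m) :
    ∃ g₁ g₂ g₃ : ℂ⟦X⟧, constantCoeff g₁ = 0 ∧ constantCoeff g₂ = 0 ∧ constantCoeff g₃ = 0 ∧
      yy ^ 3 + yy ^ 2 * xx ^ 2 - xx ^ (2 * m) = (yy + ofX (X ^ 2 * (1 + g₁))) *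
        (yy + ofX (X ^ (m - 1) * (1 + g₂))) * (yy + ofX (X ^ (m - 1) * (g₃ - 1))) := by
  obtain ⟨j, rfl⟩ : ∃ j, m = j + 3 := ⟨m - 3, by omega⟩
  obtain ⟨κ, hκ₀, hκ⟩ := exists_mul_one_sub_sq_eq_X_pow (R := ℂ) (j := j) (by omega)
  obtain ⟨α, hα₀, hα⟩ := exists_mul_sub_eq_sq_sub_one (isUnit_iff_ne_zero.2 two_ne_zero) hκ₀
  obtain ⟨μ, hμ⟩ :=
    (isUnit_iff_constantCoeff (φ := 1 - κ ^ 2)).2 (by simp [hκ₀]) |>.exists_right_inv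
  have hκμ : κ = X ^ j * μ := by linear_combination -κ * hμ + μ * hκ
  have hμ₀ : constantCoeff μ = 1 := by simpa [hκ₀] using congrArg constantCoeff hμ
  have hp₂ : X ^ (j + 3 - 1) * (1 + (μ * α - 1)) = X ^ 2 * (κ * α) := by
    rw [hκμ, show j + 3 - 1 = j + 2 from rfl]; ring
  have hp₃ : X ^ (j + 3 - 1) * (μ * (κ - α) + 1 - 1) = X ^ 2 * (κ * (κ - α)) := by
    rw [hκμ, show j + 3 - 1 = j + 2 from rfl]; ring
  refine ⟨-κ ^ 2, μ * α - 1, μ * (κ - α) + 1, by simp [hκ₀], by simp [hμ₀, hα₀],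
    by simp [hμ₀, hα₀, hκ₀], cubic_eq_mul_of_vieta ?_ ?_ ?_⟩ <;> rw [hp₂, hp₃]
  · ring
  · linear_combination X ^ 4 * κ ^ 2 * hα
  · linear_combination X ^ 6 * (1 - κ ^ 2) * κ ^ 2 * hα - X ^ 6 * (κ * (1 - κ ^ 2) + X ^ j) * hκ

/-- The germ `C_{3,2m} : y³ + y²x² - x^{2m} = 0` at the origin, for `m ≥ 4`,
has exactly three smooth branches `L₁ : y + x² + (higher) = 0` and
`L₂, L₃ : y ± x^{m-1} + (higher) = 0`; moreover `(L₂ ∪ L₃, O)` is an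
`A_{2m-3}` singularity and `(L₁ ∪ L₂, O)` is an `A_3` singularity. -/
theorem C3_2m_branches (m : ℕ) (hm : 4 ≤ m) :
    ∃ u L₁ L₂ L₃ : R2, IsUnit u ∧
      yy ^ 3 + yy ^ 2 * xx ^ 2 - xx ^ (2 * m) = u * L₁ * L₂ * L₃ ∧
      IsSmoothGerm L₁ ∧ IsSmoothGerm L₂ ∧ IsSmoothGerm L₃ ∧
      (∃ h ∈ mIdeal ^ 3, L₁ = yy + xx ^ 2 + h) ∧
      (∃ h ∈ mIdeal ^ m, L₂ = yy + xx ^ (m - 1) + h) ∧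
      (∃ h ∈ mIdeal ^ m, L₃ = yy - xx ^ (m - 1) + h) ∧
      AnalyticEquiv (L₂ * L₃) (yy ^ 2 - xx ^ (2 * m - 2)) ∧
      AnalyticEquiv (L₁ * L₂) (yy ^ 2 - xx ^ 4) := by
  obtain ⟨g₁, g₂, g₃, hg₁, hg₂, hg₃, hfactor⟩ := exists_branch_series hm
  have hm₁ : m - 1 + 1 = m := by omega
  refine ⟨1, _, _, _, isUnit_one, by rw [hfactor, one_mul], isSmoothGerm_yy_add_ofX le_rfl _,
    isSmoothGerm_yy_add_ofX (by omega) _, isSmoothGerm_yy_add_ofX (by omega) _,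
    exists_eq_yy_add_X_pow_add 2 hg₁, hm₁ ▸ exists_eq_yy_add_X_pow_add (m - 1) hg₂,
    hm₁ ▸ exists_eq_yy_sub_X_pow_add (m - 1) hg₃, ?_, ?_⟩
  · rw [show 2 * m - 2 = 2 * (m - 1) by omega]
    refine analyticEquiv_mul_of_sub_eq (w := 2 + g₂ - g₃) (m - 1) (by simp; omega) (by simp; omega)
      ?_ (by ring)
    exact isUnit_iff_constantCoeff.2 (by simp [hg₂, hg₃, map_ofNat])
  · refine analyticEquiv_mul_of_sub_eq (w := 1 + g₁ - X ^ (m - 3) * (1 + g₂)) 2 (by simp)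
      (by simp; omega) ?_ ?_
    · exact isUnit_iff_constantCoeff.2 (by simp [hg₁, show m - 3 ≠ 0 by omega])
    · rw [show m - 1 = 2 + (m - 3) by omega, pow_add]; ring
end
end

section
/- A smooth conic B₂ and an irreducible three-cuspidal quartic B₄ cannot satisfy B₂ ∩ B₄ = 2A_5 + A_3 (i.e., intersection multiplicities 3, 3, 2 at three points where both curves are smooth and tangent accordingly), because the dual curves B₂* (a conic) and B₄* (a cubic, by the class formula) would then also intersect in 2A_5 + A_3, requiring total intersection number 8 > 6 = 2·3, contradicting Bézout's theorem. -/
/-- A smooth conic `B₂` and a three-cuspidal irreducible quartic `B₄` cannot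
intersect as `2A_5 + A_3`, i.e. at exactly three points with local intersection
multiplicities 3, 3, 2 (tangentially, at smooth points of both curves).
Formalized relative to an abstract duality theory: the dual of a smooth conic
is a conic, the dual of a three-cuspidal quartic is a cubic (class formula:
`n* = 12 - 3·3 = 3`), such tangential intersection data dualizes to the same
intersection data between the dual curves, the dual curves have no common
component, and Bézout's theorem bounds the total intersection multiplicity of
two curves without common component by the product of their degrees
(`8 > 6 = 2·3` gives the contradiction). -/
theorem no_conic_quartic_2A5_A3 {Curve Point : Type*} [DecidableEq Point]
    (degree : Curve → ℕ) (dual : Curve → Curve)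
    (Imult : Curve → Curve → Point → ℕ)
    (SmoothConic ThreeCuspidalQuartic : Curve → Prop)
    (NoCommonComp : Curve → Curve → Prop)
    (hdualConic : ∀ C, SmoothConic C → degree (dual C) = 2)
    (hdualQuartic : ∀ C, ThreeCuspidalQuartic C → degree (dual C) = 3)
    (hdualContact : ∀ B₂ B₄ (P₁ P₂ P₃ : Point),
      SmoothConic B₂ → ThreeCuspidalQuartic B₄ →
      P₁ ≠ P₂ → P₁ ≠ P₃ → P₂ ≠ P₃ →
      Imult B₂ B₄ P₁ = 3 → Imult B₂ B₄ P₂ = 3 → Imult B₂ B₄ P₃ = 2 →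
      ∃ Q₁ Q₂ Q₃ : Point, Q₁ ≠ Q₂ ∧ Q₁ ≠ Q₃ ∧ Q₂ ≠ Q₃ ∧
        Imult (dual B₂) (dual B₄) Q₁ = 3 ∧
        Imult (dual B₂) (dual B₄) Q₂ = 3 ∧
        Imult (dual B₂) (dual B₄) Q₃ = 2)
    (hNoCommon : ∀ B₂ B₄, SmoothConic B₂ → ThreeCuspidalQuartic B₄ →
      NoCommonComp (dual B₂) (dual B₄))
    (bezout : ∀ C D, NoCommonComp C D → ∀ S : Finset Point,
      (∑ P ∈ S, Imult C D P) ≤ degree C * degree D) :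
    ¬ ∃ (B₂ B₄ : Curve) (P₁ P₂ P₃ : Point),
      SmoothConic B₂ ∧ ThreeCuspidalQuartic B₄ ∧
      P₁ ≠ P₂ ∧ P₁ ≠ P₃ ∧ P₂ ≠ P₃ ∧
      Imult B₂ B₄ P₁ = 3 ∧ Imult B₂ B₄ P₂ = 3 ∧ Imult B₂ B₄ P₃ = 2 := by
  rintro ⟨B₂, B₄, P₁, P₂, P₃, hC, hQ, h12, h13, h23, m1, m2, m3⟩
  obtain ⟨Q₁, Q₂, Q₃, q12, q13, q23, n1, n2, n3⟩ :=
    hdualContact B₂ B₄ P₁ P₂ P₃ hC hQ h12 h13 h23 m1 m2 m3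
  have hb := bezout (dual B₂) (dual B₄) (hNoCommon B₂ B₄ hC hQ) {Q₁, Q₂, Q₃}
  rw [Finset.sum_insert (by simp [q12, q13]),
    Finset.sum_insert (by simp [q23]), Finset.sum_singleton,
    hdualConic B₂ hC, hdualQuartic B₄ hQ, n1, n2, n3] at hb
  omega
end
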